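/- arXiv:1505.08047 — 2 statements merged into one kernel-verified Lean document; each statement's English description precedes it below -/
import Mathlib

section
/- Let $L\subset\mathbb{R}^d$ be a Bravais lattice with first distance $\lambda_1$ and second distance $\lambda_2$, and fix constants $C>0$, $\mu>0$, $\varepsilon>0$, $p>d$ and $r_0\in[\lambda_1,\lambda_2)$. Let $\theta\in(0,\lambda_1/2)$ and let $V_\theta$ be a $d$-admissible potential with $|\mathcal{P}(L,V_\theta)|\le C\theta^{1+\mu}$ and $|V_\theta'(r)|\le\theta^{2+\varepsilon}r^{-p-1}$ for all $r>r_0$. Let $B=\{b_1,\dots,b_N\}\subset L$, $0\le\alpha_0<\lambda_1/2$, and let $B^{\alpha_0}$ be an $\alpha_0$-compact perturbation of $B$. Then $\sum_{i=1}^N\sum_{x\in L,\,x\ne b_i}\alpha_{i,x}V_\theta'(\|b_i-x\|)\ \ge\ -\frac{2C}{\lambda_1}N\theta^{1+\mu}\alpha_0-2\zeta_L^*(p)N\theta^{2+\varepsilon}-2\Big(\frac{\zeta_L^*(p)}{\lambda_1}+\zeta_L^*(p+1)\Big)N\theta^{2+\varepsilon}\alpha_0$. -/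
noncomputable section
open scoped BigOperators
open scoped Classical

/-- Points of `ℝ^d`. -/
abbrev Esp (d : ℕ) := EuclideanSpace ℝ (Fin d)

/-- `L` is a Bravais lattice of `ℝ^d`: the set of integer linear combinations
of a basis of `ℝ^d`. -/
def IsBravais {d : ℕ} (L : Set (Esp d)) : Prop :=
  ∃ b : Module.Basis (Fin d) ℝ (Esp d),
    L = Set.range fun c : Fin d → ℤ => ∑ i, (c i : ℝ) • b i

/-- First distance `λ₁` of the lattice. -/
def lam1 {d : ℕ} (L : Set (Esp d)) : ℝ :=
  sInf {r | ∃ x ∈ L, x ≠ 0 ∧ ‖x‖ = r}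

/-- Second distance `λ₂` of the lattice. -/
def lam2 {d : ℕ} (L : Set (Esp d)) : ℝ :=
  sInf {r | ∃ x ∈ L, lam1 L < ‖x‖ ∧ ‖x‖ = r}

/-- `m(λ)`: number of lattice points of norm `λ`. -/
def mCard {d : ℕ} (L : Set (Esp d)) (lam : ℝ) : ℕ :=
  Nat.card {x : Esp d // x ∈ L ∧ ‖x‖ = lam}

/-- A `d`-admissible potential: `C²` on `(0,∞)` and with absolutely convergent
lattice sums for `V`, `r V'` and `r² V''` on every Bravais lattice of `ℝ^d`. -/
def Admissible (d : ℕ) (V : ℝ → ℝ) : Prop :=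
  ContDiffOn ℝ 2 V (Set.Ioi 0) ∧
  ∀ L : Set (Esp d), IsBravais L →
    (Summable fun x : {x : Esp d // x ∈ L ∧ x ≠ 0} => |V ‖(x : Esp d)‖|) ∧
    (Summable fun x : {x : Esp d // x ∈ L ∧ x ≠ 0} =>
      ‖(x : Esp d)‖ * |deriv V ‖(x : Esp d)‖|) ∧
    (Summable fun x : {x : Esp d // x ∈ L ∧ x ≠ 0} =>
      ‖(x : Esp d)‖ ^ 2 * |deriv (deriv V) ‖(x : Esp d)‖|)

/-- Pressure of `L` submitted to `V`. -/
def pressure {d : ℕ} (L : Set (Esp d)) (V : ℝ → ℝ) : ℝ :=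
  -∑' x : {x : Esp d // x ∈ L ∧ x ≠ 0}, ‖(x : Esp d)‖ * deriv V ‖(x : Esp d)‖

/-- Lattice sum `ζ*_L(n) = ∑_{x ∈ L, ‖x‖ > λ₁} ‖x‖^{-n}`. -/
def zetaStar {d : ℕ} (L : Set (Esp d)) (n : ℝ) : ℝ :=
  ∑' x : {x : Esp d // x ∈ L ∧ lam1 L < ‖x‖}, ‖(x : Esp d)‖ ^ (-n)

/-- Lattice sum `ζ̄_L(n) = ∑_{x ∈ L, ‖x‖ > λ₁} (‖x‖ - λ₁)^{-n}`. -/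
def zetaBar {d : ℕ} (L : Set (Esp d)) (n : ℝ) : ℝ :=
  ∑' x : {x : Esp d // x ∈ L ∧ lam1 L < ‖x‖}, (‖(x : Esp d)‖ - lam1 L) ^ (-n)

/-- `f` realizes an `α`-compact perturbation `f '' B` of `B`:
each `b ∈ B` is moved to `f b` with `‖b - f b‖ ≤ α`, and `f b` is the unique point of the
perturbed family within distance `α` of `b`. -/
def IsPertMap {d : ℕ} (B : Set (Esp d)) (f : Esp d → Esp d) (α : ℝ) : Prop :=
  ∀ b ∈ B, ‖b - f b‖ ≤ α ∧ ∀ b' ∈ B, ‖b - f b'‖ ≤ α → f b' = f b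

/-- The point of the perturbed configuration corresponding to `x ∈ L`. -/
def pertPoint {d : ℕ} (B : Set (Esp d)) (f : Esp d → Esp d) (x : Esp d) : Esp d :=
  if x ∈ B then f x else x

/-- The perturbed configuration `L^α(B) = (L \ B) ∪ B^α`. -/
def pertLattice {d : ℕ} (L B : Set (Esp d)) (f : Esp d → Esp d) : Set (Esp d) :=
  (L \ B) ∪ f '' B

/-- `α_{i,x} = ‖b_i^α - y‖ - ‖b_i - x‖`. -/
def alphaCoef {d : ℕ} (B : Set (Esp d)) (f : Esp d → Esp d) (b x : Esp d) : ℝ :=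
  ‖f b - pertPoint B f x‖ - ‖b - x‖

/-- The energy difference `Δ_L^α(V; B)` between the perturbed and unperturbed
configurations. -/
def Delta {d : ℕ} (L : Set (Esp d)) (B : Finset (Esp d)) (f : Esp d → Esp d)
    (V : ℝ → ℝ) : ℝ :=
  (∑ b ∈ B, ∑' y : {y : Esp d // y ∈ pertLattice L ↑B f ∧ y ≠ f b}, V ‖f b - (y : Esp d)‖)
  - ∑ b ∈ B, ∑' x : {x : Esp d // x ∈ L ∧ x ≠ b}, V ‖b - (x : Esp d)‖


/-! Each `|α_{i,x}|` is at most `2α₀` by the triangle inequality, so every row of the sum is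
bounded below by `-2α₀ ∑_{z ∈ L*} |V'(‖z‖)|`, independently of `b_i` by translation invariance of
`L`. Points beyond the first shell have `‖z‖ ≥ λ₂ > r₀`, where the decay of `V'` bounds their
contribution by `θ^{2+ε} ζ*_L(p+1)`. On the shell `‖z‖ = λ₁` all terms are equal, so `λ₁` times
their sum is the absolute value of the shell part of the pressure, i.e. of the pressure minus its
far part, which is at most `Cθ^{1+μ} + θ^{2+ε} ζ*_L(p)`. -/

section

variable {d : ℕ} {L : Set (Esp d)}

namespace IsBravais

theorem exists_basis_eq_span (hL : IsBravais L) :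
    ∃ b : Module.Basis (Fin d) ℝ (Esp d), L = Submodule.span ℤ (Set.range b) := by
  obtain ⟨b, rfl⟩ := hL
  refine ⟨b, Set.ext fun x => ?_⟩
  simp only [Set.mem_range, SetLike.mem_coe, Submodule.mem_span_range_iff_exists_fun,
    Int.cast_smul_eq_zsmul]

theorem summable_norm_rpow_neg (hL : IsBravais L) {n : ℝ} (hn : (d : ℝ) < n)
    (P : Esp d → Prop) :
    Summable fun x : {x // x ∈ L ∧ P x} => ‖(x : Esp d)‖ ^ (-n) := by
  obtain ⟨b, rfl⟩ := exists_basis_eq_span hL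
  set M := Submodule.span ℤ (Set.range b)
  have hrank : Module.finrank ℤ M = d := by
    rw [ZLattice.rank ℝ, finrank_euclideanSpace_fin]
  have hs : Summable fun z : M => ‖z‖ ^ (-n) :=
    ZLattice.summable_norm_rpow M (-n) (by rw [hrank]; linarith)
  let i : {x // x ∈ (M : Set (Esp d)) ∧ P x} → M := fun x => ⟨x.1, x.2.1⟩
  have hi : Function.Injective i := by
    intro x y h
    exact Subtype.ext (congrArg Subtype.val h :)
  exact (hs.comp_injective hi).congr fun x => rfl

theorem sub_mem (hL : IsBravais L) {x y : Esp d} (hx : x ∈ L) (hy : y ∈ L) : x - y ∈ L := by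
  obtain ⟨b, rfl⟩ := exists_basis_eq_span hL
  exact Submodule.sub_mem _ hx hy

def puncturedSubEquiv (hL : IsBravais L) {b : Esp d} (hb : b ∈ L) :
    {x // x ∈ L ∧ x ≠ b} ≃ {z // z ∈ L ∧ z ≠ 0} where
  toFun x := ⟨b - x, hL.sub_mem hb x.2.1, sub_ne_zero.2 x.2.2.symm⟩
  invFun z := ⟨b - z, hL.sub_mem hb z.2.1, fun h => z.2.2 (sub_eq_self.1 h)⟩
  left_inv x := Subtype.ext (sub_sub_cancel b x)
  right_inv z := Subtype.ext (sub_sub_cancel b z)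

theorem summable_comp_sub_iff (hL : IsBravais L) {b : Esp d} (hb : b ∈ L) {F : Esp d → ℝ} :
    (Summable fun x : {x // x ∈ L ∧ x ≠ b} => F (b - x)) ↔
      Summable fun z : {z // z ∈ L ∧ z ≠ 0} => F z := by
  rw [← (hL.puncturedSubEquiv hb).summable_iff]
  rfl

theorem tsum_comp_sub (hL : IsBravais L) {b : Esp d} (hb : b ∈ L) (F : Esp d → ℝ) :
    ∑' x : {x // x ∈ L ∧ x ≠ b}, F (b - x) = ∑' z : {z // z ∈ L ∧ z ≠ 0}, F z :=
  (puncturedSubEquiv hL hb).tsum_eq (fun z => F z)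

end IsBravais

theorem lam1_le_norm {x : Esp d} (hx : x ∈ L) (hx0 : x ≠ 0) : lam1 L ≤ ‖x‖ :=
  csInf_le ⟨0, by rintro r ⟨y, -, -, rfl⟩; exact norm_nonneg y⟩ ⟨x, hx, hx0, rfl⟩

theorem lam2_le_norm {x : Esp d} (hx : x ∈ L) (hx1 : lam1 L < ‖x‖) : lam2 L ≤ ‖x‖ :=
  csInf_le ⟨0, by rintro r ⟨y, -, -, rfl⟩; exact norm_nonneg y⟩ ⟨x, hx, hx1, rfl⟩

theorem tsum_punctured_eq_shell_add_far (hlam : 0 < lam1 L) {F : Esp d → ℝ}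
    (hF : Summable fun x : {x // x ∈ L ∧ x ≠ 0} => F x) :
    ∑' x : {x // x ∈ L ∧ x ≠ 0}, F x =
      ∑' x : {x // x ∈ L ∧ ‖x‖ = lam1 L}, F x + ∑' x : {x // x ∈ L ∧ lam1 L < ‖x‖}, F x := by
  have hset : {x | x ∈ L ∧ x ≠ 0} =
      {x | x ∈ L ∧ ‖x‖ = lam1 L} ∪ {x | x ∈ L ∧ lam1 L < ‖x‖} := by
    ext x
    simp only [Set.mem_ofPred_eq, Set.mem_union]
    constructor
    · rintro ⟨hx, hx0⟩
      rcases (lam1_le_norm hx hx0).eq_or_lt with h | h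
      exacts [Or.inl ⟨hx, h.symm⟩, Or.inr ⟨hx, h⟩]
    · rintro (⟨hx, h⟩ | ⟨hx, h⟩) <;> refine ⟨hx, fun h0 => ?_⟩ <;>
        simp only [h0, norm_zero] at h <;> linarith
  have hdisj : Disjoint {x | x ∈ L ∧ ‖x‖ = lam1 L} {x | x ∈ L ∧ lam1 L < ‖x‖} :=
    Set.disjoint_left.2 fun x h1 h2 => h2.2.ne' h1.2
  change Summable (F ∘ Subtype.val : ({x | x ∈ L ∧ x ≠ 0} : Set (Esp d)) → ℝ) at hF
  change ∑' x : ({x | x ∈ L ∧ x ≠ 0} : Set (Esp d)), F x = _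
  rw [hset] at hF ⊢
  exact Summable.tsum_union_disjoint hdisj
    (hF.comp_injective (Set.inclusion_injective Set.subset_union_left))
    (hF.comp_injective (Set.inclusion_injective Set.subset_union_right))

theorem tsum_shell_eq_mCard_smul {r c : ℝ} {F : Esp d → ℝ}
    (hF : ∀ x ∈ L, ‖x‖ = r → F x = c) :
    ∑' x : {x // x ∈ L ∧ ‖x‖ = r}, F x = mCard L r • c :=
  (tsum_congr fun x : {x // x ∈ L ∧ ‖x‖ = r} => hF x.1 x.2.1 x.2.2).trans (tsum_const c)

theorem abs_tsum_le_of_abs_le {ι : Type*} {F G : ι → ℝ} (hG : Summable G)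
    (hFG : ∀ i, |F i| ≤ G i) : |∑' i, F i| ≤ ∑' i, G i :=
  tsum_of_norm_bounded (f := F) hG.hasSum hFG

theorem abs_tsum_far_le (hL : IsBravais L) {q K : ℝ} (hq : (d : ℝ) < q) {F : Esp d → ℝ}
    (hF : ∀ x ∈ L, lam1 L < ‖x‖ → |F x| ≤ K * ‖x‖ ^ (-q)) :
    |∑' x : {x // x ∈ L ∧ lam1 L < ‖x‖}, F x| ≤ K * zetaStar L q := by
  rw [zetaStar, ← tsum_mul_left]
  exact abs_tsum_le_of_abs_le ((hL.summable_norm_rpow_neg hq _).mul_left K)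
    fun x => hF x.1 x.2.1 x.2.2

theorem neg_mul_tsum_abs_le_tsum_mul {ι : Type*} {a g : ι → ℝ} {A : ℝ}
    (ha : ∀ i, |a i| ≤ A) (hg : Summable fun i => |g i|) :
    -(A * ∑' i, |g i|) ≤ ∑' i, a i * g i := by
  refine neg_le_of_abs_le ?_
  rw [← tsum_mul_left]
  refine abs_tsum_le_of_abs_le (hg.mul_left A) fun i => ?_
  rw [abs_mul]
  exact mul_le_mul_of_nonneg_right (ha i) (abs_nonneg _)

theorem abs_alphaCoef_le {B : Set (Esp d)} {f : Esp d → Esp d} {α : ℝ}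
    (hf : IsPertMap B f α) (hα : 0 ≤ α) {b : Esp d} (hb : b ∈ B) (x : Esp d) :
    |alphaCoef B f b x| ≤ 2 * α := by
  have hx : ‖x - pertPoint B f x‖ ≤ α := by
    unfold pertPoint
    split_ifs with h
    · exact (hf x h).1
    · simpa using hα
  calc |alphaCoef B f b x| ≤ ‖(f b - pertPoint B f x) - (b - x)‖ := abs_norm_sub_norm_le _ _
    _ = ‖(x - pertPoint B f x) - (b - f b)‖ := by congr 1; abel
    _ ≤ ‖x - pertPoint B f x‖ + ‖b - f b‖ := norm_sub_le _ _
    _ ≤ 2 * α := by linarith [(hf b hb).1]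

theorem neg_two_mul_tsum_abs_le_tsum_alphaCoef_mul (hL : IsBravais L) {B : Set (Esp d)}
    {f : Esp d → Esp d} {α : ℝ} (hf : IsPertMap B f α) (hα : 0 ≤ α) {b : Esp d} (hb : b ∈ B)
    (hbL : b ∈ L) {W : ℝ → ℝ}
    (hW : Summable fun z : {z // z ∈ L ∧ z ≠ 0} => |W ‖(z : Esp d)‖|) :
    -(2 * α * ∑' z : {z // z ∈ L ∧ z ≠ 0}, |W ‖(z : Esp d)‖|) ≤
      ∑' x : {x // x ∈ L ∧ x ≠ b}, alphaCoef B f b x * W ‖b - (x : Esp d)‖ := by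
  rw [← hL.tsum_comp_sub hbL fun z => |W ‖z‖|]
  exact neg_mul_tsum_abs_le_tsum_mul (abs_alphaCoef_le hf hα hb ·)
    ((hL.summable_comp_sub_iff hbL (F := fun z => |W ‖z‖|)).2 hW)

theorem summable_abs_deriv (hlam : 0 < lam1 L) {V : ℝ → ℝ}
    (hV : Summable fun x : {x // x ∈ L ∧ x ≠ 0} => ‖(x : Esp d)‖ * |deriv V ‖(x : Esp d)‖|) :
    Summable fun x : {x // x ∈ L ∧ x ≠ 0} => |deriv V ‖(x : Esp d)‖| := by
  refine Summable.of_nonneg_of_le (fun _ => abs_nonneg _) (fun x => ?_) (hV.mul_left (lam1 L)⁻¹)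
  rw [inv_mul_eq_div, le_div_iff₀' hlam]
  exact mul_le_mul_of_nonneg_right (lam1_le_norm x.2.1 x.2.2) (abs_nonneg _)

theorem tsum_abs_deriv_le (hL : IsBravais L) (hlam : 0 < lam1 L) {V : ℝ → ℝ} {p P₀ K : ℝ}
    (hp : (d : ℝ) < p)
    (hV : Summable fun x : {x // x ∈ L ∧ x ≠ 0} => ‖(x : Esp d)‖ * |deriv V ‖(x : Esp d)‖|)
    (hP : |pressure L V| ≤ P₀)
    (hfar : ∀ x ∈ L, lam1 L < ‖x‖ → |deriv V ‖x‖| ≤ K * ‖x‖ ^ (-p - 1)) :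
    ∑' x : {x // x ∈ L ∧ x ≠ 0}, |deriv V ‖(x : Esp d)‖| ≤
      (P₀ + K * zetaStar L p) / lam1 L + K * zetaStar L (p + 1) := by
  set m := mCard L (lam1 L)
  set S := ∑' x : {x // x ∈ L ∧ lam1 L < ‖x‖}, ‖(x : Esp d)‖ * deriv V ‖(x : Esp d)‖
  have hpressure : pressure L V = -(m • (lam1 L * deriv V (lam1 L)) + S) := by
    have hg : Summable fun x : {x // x ∈ L ∧ x ≠ 0} =>
        ‖(x : Esp d)‖ * deriv V ‖(x : Esp d)‖ :=
      summable_abs_iff.1 (hV.congr fun x => by rw [abs_mul, abs_norm])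
    rw [pressure, tsum_punctured_eq_shell_add_far (F := fun x => ‖x‖ * deriv V ‖x‖) hlam hg,
      tsum_shell_eq_mCard_smul (F := fun x => ‖x‖ * deriv V ‖x‖) fun x _ hx => by rw [hx]]
  have hsplit : ∑' x : {x // x ∈ L ∧ x ≠ 0}, |deriv V ‖(x : Esp d)‖| = m • |deriv V (lam1 L)| +
      ∑' x : {x // x ∈ L ∧ lam1 L < ‖x‖}, |deriv V ‖(x : Esp d)‖| := by
    rw [tsum_punctured_eq_shell_add_far (F := fun x => |deriv V ‖x‖|) hlam
        (summable_abs_deriv hlam hV),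
      tsum_shell_eq_mCard_smul (F := fun x => |deriv V ‖x‖|) fun x _ hx => by rw [hx]]
  have hS : |S| ≤ K * zetaStar L p := abs_tsum_far_le hL hp fun x hx hxfar => by
    have hx0 : 0 < ‖x‖ := hlam.trans hxfar
    calc |‖x‖ * deriv V ‖x‖| = ‖x‖ * |deriv V ‖x‖| := by rw [abs_mul, abs_norm]
      _ ≤ ‖x‖ * (K * ‖x‖ ^ (-p - 1)) := mul_le_mul_of_nonneg_left (hfar x hx hxfar) hx0.le
      _ = K * (‖x‖ ^ (1 : ℝ) * ‖x‖ ^ (-p - 1)) := by rw [Real.rpow_one]; ring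
      _ = K * ‖x‖ ^ (-p) := by rw [← Real.rpow_add hx0]; ring_nf
  have hfar_sum : ∑' x : {x // x ∈ L ∧ lam1 L < ‖x‖}, |deriv V ‖(x : Esp d)‖| ≤
      K * zetaStar L (p + 1) :=
    (le_abs_self _).trans <| abs_tsum_far_le (q := p + 1) hL (by linarith) fun x hx hxfar => by
      rw [abs_abs, neg_add']
      exact hfar x hx hxfar
  have hshell : m • |deriv V (lam1 L)| ≤ (P₀ + K * zetaStar L p) / lam1 L := by
    rw [le_div_iff₀' hlam]
    calc lam1 L * m • |deriv V (lam1 L)| = |m • (lam1 L * deriv V (lam1 L))| := by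
          rw [nsmul_eq_mul, nsmul_eq_mul, abs_mul, abs_mul, Nat.abs_cast, abs_of_pos hlam]
          ring
      _ = |pressure L V + S| := by rw [hpressure, ← abs_neg]; congr 1; ring
      _ ≤ |pressure L V| + |S| := abs_add_le _ _
      _ ≤ P₀ + K * zetaStar L p := add_le_add hP hS
  rw [hsplit]
  exact add_le_add hshell hfar_sum

end

theorem statement3_general (d : ℕ) (L : Set (Esp d)) (hL : IsBravais L)
    (C μ ε p r0 : ℝ)
    (hp : (d : ℝ) < p)
    (hr0' : r0 < lam2 L)
    (θ : ℝ) (hθ : 0 < θ) (hθ' : θ < lam1 L / 2)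
    (V : ℝ → ℝ) (hadm : Admissible d V)
    (hP : |pressure L V| ≤ C * θ ^ (1 + μ))
    (hV' : ∀ r : ℝ, r0 < r → |deriv V r| ≤ θ ^ (2 + ε) * r ^ (-p - 1))
    (N : ℕ) (B : Finset (Esp d)) (hB : ↑B ⊆ L) (hcard : B.card = N)
    (α0 : ℝ) (hα0 : 0 ≤ α0)
    (f : Esp d → Esp d) (hf : IsPertMap ↑B f α0) :
    (∑ b ∈ B, ∑' x : {x : Esp d // x ∈ L ∧ x ≠ b},
        alphaCoef ↑B f b (x : Esp d) * deriv V ‖b - (x : Esp d)‖) ≥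
      -(2 * C / lam1 L) * (N : ℝ) * θ ^ (1 + μ) * α0
      - 2 * zetaStar L p * (N : ℝ) * θ ^ (2 + ε)
      - 2 * (zetaStar L p / lam1 L + zetaStar L (p + 1)) * (N : ℝ) * θ ^ (2 + ε) * α0 := by
  have hlam : 0 < lam1 L := by linarith
  obtain ⟨-, hV, -⟩ := hadm.2 L hL
  set T := ∑' z : {z // z ∈ L ∧ z ≠ 0}, |deriv V ‖(z : Esp d)‖|
  have hT : T ≤ (C * θ ^ (1 + μ) + θ ^ (2 + ε) * zetaStar L p) / lam1 L +
      θ ^ (2 + ε) * zetaStar L (p + 1) :=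
    tsum_abs_deriv_le hL hlam hp hV hP fun x hx hxfar =>
      hV' _ (hr0'.trans_le (lam2_le_norm hx hxfar))
  have hsum := Finset.card_nsmul_le_sum B _ _ fun b hb =>
    neg_two_mul_tsum_abs_le_tsum_alphaCoef_mul hL hf hα0 hb (hB hb) (summable_abs_deriv hlam hV)
  rw [hcard, nsmul_eq_mul] at hsum
  have hζ : 0 ≤ zetaStar L p * N * θ ^ (2 + ε) :=
    mul_nonneg (mul_nonneg (tsum_nonneg fun _ => by positivity) N.cast_nonneg) (by positivity)
  have hTN : 2 * α0 * N * T ≤ 2 * α0 * N * ((C * θ ^ (1 + μ) + θ ^ (2 + ε) * zetaStar L p) /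
      lam1 L + θ ^ (2 + ε) * zetaStar L (p + 1)) :=
    mul_le_mul_of_nonneg_left hT (by positivity)
  have hexpand : 2 * α0 * N * ((C * θ ^ (1 + μ) + θ ^ (2 + ε) * zetaStar L p) / lam1 L +
      θ ^ (2 + ε) * zetaStar L (p + 1)) = (2 * C / lam1 L) * N * θ ^ (1 + μ) * α0 +
      2 * (zetaStar L p / lam1 L + zetaStar L (p + 1)) * N * θ ^ (2 + ε) * α0 := by
    ring
  linarith

/-- lower bound on the first-order term
`∑_{i=1}^N ∑_{x ∈ L, x ≠ b_i} α_{i,x} V'(‖b_i - x‖)`. -/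
theorem statement3 (d : ℕ) (L : Set (Esp d)) (hL : IsBravais L)
    (C μ ε p r0 : ℝ)
    (hC : 0 < C) (hμ : 0 < μ) (hε : 0 < ε) (hp : (d : ℝ) < p)
    (hr0 : lam1 L ≤ r0) (hr0' : r0 < lam2 L)
    (θ : ℝ) (hθ : 0 < θ) (hθ' : θ < lam1 L / 2)
    (V : ℝ → ℝ) (hadm : Admissible d V)
    (hP : |pressure L V| ≤ C * θ ^ (1 + μ))
    (hV' : ∀ r : ℝ, r0 < r → |deriv V r| ≤ θ ^ (2 + ε) * r ^ (-p - 1))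
    (N : ℕ) (B : Finset (Esp d)) (hB : ↑B ⊆ L) (hcard : B.card = N)
    (α0 : ℝ) (hα0 : 0 ≤ α0) (hα0' : α0 < lam1 L / 2)
    (f : Esp d → Esp d) (hf : IsPertMap ↑B f α0) :
    (∑ b ∈ B, ∑' x : {x : Esp d // x ∈ L ∧ x ≠ b},
        alphaCoef ↑B f b (x : Esp d) * deriv V ‖b - (x : Esp d)‖) ≥
      -(2 * C / lam1 L) * (N : ℝ) * θ ^ (1 + μ) * α0
      - 2 * zetaStar L p * (N : ℝ) * θ ^ (2 + ε)
      - 2 * (zetaStar L p / lam1 L + zetaStar L (p + 1)) * (N : ℝ) * θ ^ (2 + ε) * α0 :=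
  statement3_general d L hL C μ ε p r0 hp hr0' θ hθ hθ' V hadm hP hV' N B hB hcard α0 hα0 f hf
end
end

section
/- Let $V:(0,\infty)\to\mathbb{R}$ be a $C^2$ function with $V(r)=0$ for all $r\ge 5/2$, $V'(1)=V'(2)=0$, $V''(1)=-1$ and $V''(2)=1/3$. Then there exists $\alpha_1>0$ such that for every $\alpha\in(0,\alpha_1)$, $\Delta^{\alpha}:=\sum_{x\in\mathbb{Z},\,x\ne 0}\big[V(|x-\alpha|)-V(|x|)\big]<0$. Consequently, the lattice $\mathbb{Z}$ is not a $1$-compact local minimum for the total $V$-energy: for every $\alpha_0>0$ there exist $\alpha\in[0,\alpha_0)$ and an $\alpha$-compact perturbation $\{\alpha\}$ of $B=\{0\}\subset\mathbb{Z}$ with $\Delta_{\mathbb{Z}}^{\alpha}(V;B)<0$. -/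
/-!
Only the sites `±1, ±2` interact with a point at distance `α ≤ 1/2` from the origin, so
`Δ^α = g(α) - g(0)` with `g(a) = V(1-a) + V(1+a) + V(2-a) + V(2+a)`. The function `g` is even,
so `g'(0) = 0`, while `g''(0) = 2(V''(1) + V''(2)) = -4/3 < 0`; hence `g'` is negative just to
the right of `0` and `g` decreases strictly there.
-/

open Filter Topology Set

/-- A strict, one-sided form of the second-derivative test `isLocalMax_of_deriv_deriv_neg`. -/
theorem eventually_nhdsGT_lt_of_hasDerivAt_of_hasDerivAt_neg {f f' : ℝ → ℝ} {x₀ c : ℝ}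
    (hf : ∀ᶠ x in 𝓝 x₀, HasDerivAt f (f' x) x) (hf'₀ : f' x₀ = 0) (hf' : HasDerivAt f' c x₀)
    (hc : c < 0) : ∀ᶠ x in 𝓝[>] x₀, f x < f x₀ := by
  have hsign := eventually_nhdsWithin_sign_eq_of_deriv_neg (hf'.deriv ▸ hc) hf'₀
  obtain ⟨ε, hε, hball⟩ := (nhds_basis_Ioo_pos x₀).eventually_iff.1 (hf.and hsign)
  have hIco : Ico x₀ (x₀ + ε) ⊆ Ioo (x₀ - ε) (x₀ + ε) := fun x hx => ⟨by linarith [hx.1], hx.2⟩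
  have hanti : StrictAntiOn f (Ico x₀ (x₀ + ε)) := by
    refine strictAntiOn_of_hasDerivWithinAt_neg (convex_Ico _ _)
      (fun x hx => (hball (hIco hx)).1.continuousAt.continuousWithinAt)
      (fun x hx => (hball (hIco (interior_subset hx))).1.hasDerivWithinAt) fun x hx => ?_
    rw [interior_Ico] at hx
    rw [← sign_eq_neg_one_iff, (hball (hIco (Ioo_subset_Ico_self hx))).2, sign_eq_neg_one_iff]
    linarith [hx.1]
  filter_upwards [Ioo_mem_nhdsGT (lt_add_of_pos_right x₀ hε)] with x hx
  exact hanti (left_mem_Ico.2 (lt_add_of_pos_right x₀ hε)) (Ioo_subset_Ico_self hx) hx.1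

theorem hasDerivAt_comp_const_sub_add_comp_const_add {V : ℝ → ℝ} {u v r a : ℝ}
    (hu : HasDerivAt V u (r - a)) (hv : HasDerivAt V v (r + a)) :
    HasDerivAt (fun b => V (r - b) + V (r + b)) (v - u) a :=
  ((hu.comp_const_sub r a).add (hv.comp_const_add r a)).congr_deriv (neg_add_eq_sub u v)

theorem hasDerivAt_comp_const_add_sub_comp_const_sub {V : ℝ → ℝ} {u v r a : ℝ}
    (hu : HasDerivAt V u (r - a)) (hv : HasDerivAt V v (r + a)) :
    HasDerivAt (fun b => V (r + b) - V (r - b)) (v + u) a :=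
  ((hv.comp_const_add r a).sub (hu.comp_const_sub r a)).congr_deriv (sub_neg_eq_add v u)

def nearEnergy (V : ℝ → ℝ) (a : ℝ) : ℝ := V (1 - a) + V (1 + a) + (V (2 - a) + V (2 + a))

theorem eventually_nearEnergy_lt_nearEnergy_zero {V : ℝ → ℝ}
    (hV : ContDiffOn ℝ 2 V (Ioi 0)) (hneg : deriv (deriv V) 1 + deriv (deriv V) 2 < 0) :
    ∀ᶠ a in 𝓝[>] 0, nearEnergy V a < nearEnergy V 0 := by
  have hV' : ∀ x, 0 < x → HasDerivAt V (deriv V x) x := fun x hx =>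
    ((hV.differentiableOn (by norm_num)).differentiableAt (Ioi_mem_nhds hx)).hasDerivAt
  have hV'' : ∀ x, 0 < x → HasDerivAt (deriv V) (deriv (deriv V) x) x := fun x hx =>
    (((hV.deriv_of_isOpen isOpen_Ioi (m := 1) (by norm_num)).differentiableOn
      (by norm_num)).differentiableAt (Ioi_mem_nhds hx)).hasDerivAt
  refine eventually_nhdsGT_lt_of_hasDerivAt_of_hasDerivAt_neg
    (f' := fun a => deriv V (1 + a) - deriv V (1 - a) + (deriv V (2 + a) - deriv V (2 - a)))
    (c := 2 * (deriv (deriv V) 1 + deriv (deriv V) 2)) ?_ (by simp) ?_ (by linarith)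
  · filter_upwards [Ioo_mem_nhds (show (-1 : ℝ) < 0 by norm_num) one_pos] with a ha
    exact (hasDerivAt_comp_const_sub_add_comp_const_add (hV' _ (by linarith [ha.2]))
      (hV' _ (by linarith [ha.1]))).add (hasDerivAt_comp_const_sub_add_comp_const_add
      (hV' _ (by linarith [ha.2])) (hV' _ (by linarith [ha.1])))
  · refine ((hasDerivAt_comp_const_add_sub_comp_const_sub (hV'' (1 - 0) (by norm_num))
      (hV'' (1 + 0) (by norm_num))).add (hasDerivAt_comp_const_add_sub_comp_const_sub
      (hV'' (2 - 0) (by norm_num)) (hV'' (2 + 0) (by norm_num)))).congr_deriv ?_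
    simp only [add_zero, sub_zero]
    ring

theorem tsum_sub_eq_nearEnergy_sub {V : ℝ → ℝ} (hV : ∀ r : ℝ, 5 / 2 ≤ r → V r = 0) {α : ℝ}
    (hα : |α| ≤ 1 / 2) :
    ∑' x : {x : ℤ // x ≠ 0}, (V |((x : ℤ) : ℝ) - α| - V |((x : ℤ) : ℝ)|) =
      nearEnergy V α - nearEnergy V 0 := by
  let s : Finset {x : ℤ // x ≠ 0} :=
    {⟨1, one_ne_zero⟩, ⟨-1, by decide⟩, ⟨2, two_ne_zero⟩, ⟨-2, by decide⟩}
  have hfar : ∀ x ∉ s, V |((x : ℤ) : ℝ) - α| - V |((x : ℤ) : ℝ)| = 0 := by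
    rintro ⟨x, hx0⟩ hxs
    have hx : 3 ≤ |x| := by
      simp only [s, Finset.mem_insert, Finset.mem_singleton, Subtype.ext_iff] at hxs
      rw [le_abs]
      omega
    have hx' : (3 : ℝ) ≤ |(x : ℝ)| := by exact_mod_cast hx
    have htri := abs_sub_abs_le_abs_sub (x : ℝ) α
    rw [hV _ (by linarith), hV _ (by linarith), sub_zero]
  obtain ⟨hα₁, hα₂⟩ := abs_le.1 hα
  have h₁ : |(-1 : ℝ) - α| = 1 + α := by rw [abs_of_neg (by linarith)]; ring
  have h₂ : |(-2 : ℝ) - α| = 2 + α := by rw [abs_of_neg (by linarith)]; ring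
  rw [tsum_eq_sum hfar, Finset.sum_insert (by decide), Finset.sum_insert (by decide),
    Finset.sum_insert (by decide), Finset.sum_singleton]
  push_cast
  rw [abs_of_pos (by linarith : (0 : ℝ) < 1 - α), abs_of_pos (by linarith : (0 : ℝ) < 2 - α),
    h₁, h₂]
  simp only [nearEnergy, abs_neg, abs_one, abs_two, sub_zero, add_zero]
  ring

theorem statement11_general (V : ℝ → ℝ) (hV : ContDiffOn ℝ 2 V (Set.Ioi (0 : ℝ)))
    (hvanish : ∀ r : ℝ, (5 : ℝ) / 2 ≤ r → V r = 0)
    (hV''1 : deriv (deriv V) 1 = -1) (hV''2 : deriv (deriv V) 2 = 1 / 3) :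
    (∃ α1 : ℝ, 0 < α1 ∧ ∀ α : ℝ, 0 < α → α < α1 →
      (∑' x : {x : ℤ // x ≠ 0},
        (V |((x : ℤ) : ℝ) - α| - V |((x : ℤ) : ℝ)|)) < 0) ∧
    ∀ α0 : ℝ, 0 < α0 → ∃ α : ℝ, 0 ≤ α ∧ α < α0 ∧
      (∑' x : {x : ℤ // x ≠ 0},
        (V |((x : ℤ) : ℝ) - α| - V |((x : ℤ) : ℝ)|)) < 0 := by
  have hΔ : ∀ᶠ α in 𝓝[>] 0,
      (∑' x : {x : ℤ // x ≠ 0}, (V |((x : ℤ) : ℝ) - α| - V |((x : ℤ) : ℝ)|)) < 0 := by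
    filter_upwards [eventually_nearEnergy_lt_nearEnergy_zero hV (by norm_num [hV''1, hV''2]),
      Ioo_mem_nhdsGT (by norm_num : (0 : ℝ) < 1 / 2)] with α hlt hα
    rw [tsum_sub_eq_nearEnergy_sub hvanish (abs_le.2 ⟨by linarith [hα.1], hα.2.le⟩)]
    exact sub_neg.2 hlt
  obtain ⟨α1, hα1, hsub⟩ := mem_nhdsGT_iff_exists_Ioo_subset.1 hΔ
  refine ⟨⟨α1, hα1, fun α h0 h1 => hsub ⟨h0, h1⟩⟩, fun α0 hα0 => ?_⟩
  obtain ⟨α, hα, hneg⟩ := (Eventually.and (Ioo_mem_nhdsGT hα0) hΔ).exists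
  exact ⟨α, hα.1.le, hα.2, hneg⟩

/-- for a `C²` potential `V` on `(0,∞)` vanishing on `[5/2,∞)` with
`V'(1) = V'(2) = 0`, `V''(1) = -1`, `V''(2) = 1/3`, there is `α₁ > 0` such that
`Δ^α = ∑_{x ∈ ℤ*} [V(|x - α|) - V(|x|)] < 0` for every `α ∈ (0, α₁)`; consequently
`ℤ` is not a `1`-compact local minimum for the total `V`-energy: for every `α₀ > 0`
there is `α ∈ [0, α₀)` with `Δ_ℤ^α(V; {0}) = ∑_{x ∈ ℤ*}[V(|x-α|)-V(|x|)] < 0`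
(perturbing `B = {0}` to `{α}`). -/
theorem statement11 (V : ℝ → ℝ) (hV : ContDiffOn ℝ 2 V (Set.Ioi (0 : ℝ)))
    (hvanish : ∀ r : ℝ, (5 : ℝ) / 2 ≤ r → V r = 0)
    (hV'1 : deriv V 1 = 0) (hV'2 : deriv V 2 = 0)
    (hV''1 : deriv (deriv V) 1 = -1) (hV''2 : deriv (deriv V) 2 = 1 / 3) :
    (∃ α1 : ℝ, 0 < α1 ∧ ∀ α : ℝ, 0 < α → α < α1 →
      (∑' x : {x : ℤ // x ≠ 0},
        (V |((x : ℤ) : ℝ) - α| - V |((x : ℤ) : ℝ)|)) < 0) ∧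
    ∀ α0 : ℝ, 0 < α0 → ∃ α : ℝ, 0 ≤ α ∧ α < α0 ∧
      (∑' x : {x : ℤ // x ≠ 0},
        (V |((x : ℤ) : ℝ) - α| - V |((x : ℤ) : ℝ)|)) < 0 :=
  statement11_general V hV hvanish hV''1 hV''2
end
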